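/- Harten-entropy version of the compatibility lemma: let γ > 1, let h : ℝ → ℝ be twice differentiable with h' > 0, let p > 0, v ∈ ℝ, and ρ₋, ρ₊ > 0 with ρ₋ ≠ ρ₊, and set u₋ = (ρ₋, v, p), u₊ = (ρ₊, v, p) with specific entropies s_± = log(p/ρ_±^γ); assume ⟦ρ h'(s)⟧ ≠ 0. If a vector (a, b, c) ∈ ℝ³ satisfies ⟦w_h⟧ · (a, b, c) = ⟦ψ_h⟧ together with b = v a + p, then c = (v²/2) a + (p/(γ−1)) ( ⟦γ h'(s) − h(s)⟧ / ⟦ρ h'(s)⟧ ) a. -/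
import Mathlib


noncomputable section
open Real

/-- A state `u = (ρ, v, p)` of the 1D compressible Euler equations:
density `u.1`, velocity `u.2.1`, pressure `u.2.2`. -/
abbrev EulerState := ℝ × ℝ × ℝ

/-- Euclidean dot product on `ℝ × ℝ × ℝ`. -/
def dot3 (a b : EulerState) : ℝ := a.1*b.1 + a.2.1*b.2.1 + a.2.2*b.2.2

/-- Entropy variables `w_h(u)` for the Harten entropy `U_h = -ρ h(s)`, `s = log(p/ρ^γ)`. -/
def entVarH (γ : ℝ) (h : ℝ → ℝ) (u : EulerState) : EulerState :=
  ((γ-1) * deriv h (Real.log (u.2.2 / u.1 ^ γ)) / u.2.2 *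
      (-(u.1 * u.2.1^2)/2
        - (u.2.2/(γ-1)) * (h (Real.log (u.2.2 / u.1 ^ γ))
            / deriv h (Real.log (u.2.2 / u.1 ^ γ)) - γ)),
   (γ-1) * deriv h (Real.log (u.2.2 / u.1 ^ γ)) / u.2.2 * (u.1 * u.2.1),
   (γ-1) * deriv h (Real.log (u.2.2 / u.1 ^ γ)) / u.2.2 * (-u.1))

/-- Flux potential `ψ_h(u) = (γ-1) h'(s) ρ v` of the Harten entropy pair. -/
def fluxPotH (γ : ℝ) (h : ℝ → ℝ) (u : EulerState) : ℝ :=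
  (γ-1) * deriv h (Real.log (u.2.2 / u.1 ^ γ)) * u.1 * u.2.1

/-- Harten-entropy version of the compatibility lemma. At a pressure
equilibrium with `ρ₋ ≠ ρ₊` and `⟦ρ h'(s)⟧ ≠ 0`, any vector `(a,b,c)` satisfying
`⟦w_h⟧ ⬝ (a,b,c) = ⟦ψ_h⟧` and `b = v a + p` satisfies
`c = (v²/2) a + (p/(γ-1)) (⟦γ h'(s) - h(s)⟧ / ⟦ρ h'(s)⟧) a`. -/
theorem harten_ec_kep_pep_energy_flux
    (γ : ℝ) (hγ : 1 < γ) (h : ℝ → ℝ)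
    (hdiff : Differentiable ℝ h) (hdiff2 : Differentiable ℝ (deriv h))
    (hpos : ∀ s, 0 < deriv h s)
    (p v ρm ρp : ℝ) (hp : 0 < p) (hρm : 0 < ρm) (hρp : 0 < ρp) (hne : ρm ≠ ρp)
    (sm sp : ℝ) (hsm : sm = Real.log (p / ρm ^ γ)) (hsp : sp = Real.log (p / ρp ^ γ))
    (hjump : ρp * deriv h sp - ρm * deriv h sm ≠ 0)
    (a b c : ℝ)
    (hEC : dot3 (entVarH γ h (ρp, v, p) - entVarH γ h (ρm, v, p)) (a, b, c)
            = fluxPotH γ h (ρp, v, p) - fluxPotH γ h (ρm, v, p))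
    (hmom : b = v * a + p) :
    c = (v^2/2) * a
        + (p/(γ-1)) * (((γ * deriv h sp - h sp) - (γ * deriv h sm - h sm))
            / (ρp * deriv h sp - ρm * deriv h sm)) * a := by
  subst hsm hsp hmom
  have hγ' : γ - 1 ≠ 0 := by linarith
  have hp' : p ≠ 0 := ne_of_gt hp
  have hdm : deriv h (Real.log (p / ρm ^ γ)) ≠ 0 := ne_of_gt (hpos _)
  have hdp : deriv h (Real.log (p / ρp ^ γ)) ≠ 0 := ne_of_gt (hpos _)
  simp only [dot3, entVarH, fluxPotH, Prod.fst_sub, Prod.snd_sub] at hEC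
  linear_combination (norm := field_simp <;> ring)
    (-p/((γ-1)*(ρp * deriv h (Real.log (p / ρp ^ γ)) - ρm * deriv h (Real.log (p / ρm ^ γ))))) * hEC
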